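/- Let 0 < a < 1 and g(w) = 1 - e^{-w} - w^a·γ(1-a, w). Then g is twice differentiable on (0,∞) with g''(w) = -(a/w)·(e^{-w} - (1-a)·w^{a-1}·γ(1-a,w)), and 0 ≤ g''(w) ≤ a/(2-a) for all w > 0; in particular g is convex on [0,∞). -/

import Mathlib

/-- Lower incomplete gamma function γ(s,x) = ∫₀^x t^(s-1) e^(-t) dt. -/
noncomputable def lowerGamma (s x : ℝ) : ℝ := ∫ t in (0:ℝ)..x, t ^ (s - 1) * Real.exp (-t)

/-- g(w) = 1 - e^(-w) - w^a·γ(1-a, w). -/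
noncomputable def gFun (a w : ℝ) : ℝ := 1 - Real.exp (-w) - w ^ a * lowerGamma (1 - a) w

/-- First derivative of g. -/
noncomputable def gFun' (a w : ℝ) : ℝ := -(a * w ^ (a - 1) * lowerGamma (1 - a) w)

/-- Second derivative of g. -/
noncomputable def gFun'' (a w : ℝ) : ℝ :=
  -(a / w) * (Real.exp (-w) - (1 - a) * w ^ (a - 1) * lowerGamma (1 - a) w)

open Real MeasureTheory intervalIntegral Set

section aux
variable {a : ℝ}

lemma lowerGamma_eq (a w : ℝ) :
    lowerGamma (1 - a) w = ∫ t in (0:ℝ)..w, t ^ (-a) * Real.exp (-t) := by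
  unfold lowerGamma
  norm_num

lemma integrable1 (ha : 0 < a) (ha1 : a < 1) (u w : ℝ) :
    IntervalIntegrable (fun t => t ^ (-a) * Real.exp (-t)) volume u w :=
  (intervalIntegrable_rpow' (by linarith)).mul_continuousOn
    (Real.continuous_exp.comp continuous_neg).continuousOn

lemma cont2 (ha1 : a < 1) : Continuous (fun t : ℝ => t ^ (1 - a) * Real.exp (-t)) := by
  apply Continuous.mul _ (Real.continuous_exp.comp continuous_neg)
  rw [continuous_iff_continuousAt]
  exact fun x => Real.continuousAt_rpow_const x (1 - a) (Or.inr (by linarith))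

lemma integrable2 (ha1 : a < 1) (u w : ℝ) :
    IntervalIntegrable (fun t => t ^ (1 - a) * Real.exp (-t)) volume u w :=
  (cont2 ha1).intervalIntegrable u w

lemma hasDerivAt_lowerGamma (ha : 0 < a) (ha1 : a < 1) {w : ℝ} (hw : 0 < w) :
    HasDerivAt (lowerGamma (1 - a)) (w ^ (-a) * Real.exp (-w)) w := by
  have hco : ContinuousOn (fun t : ℝ => t ^ (-a) * Real.exp (-t)) (Ioi 0) := by
    intro x hx
    exact ((Real.continuousAt_rpow_const x (-a) (Or.inl (ne_of_gt hx))).mul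
      ((Real.continuous_exp.comp continuous_neg).continuousAt)).continuousWithinAt
  have h := intervalIntegral.integral_hasDerivAt_right (integrable1 ha ha1 0 w)
    (hco.stronglyMeasurableAtFilter isOpen_Ioi w hw)
    (((Real.continuousAt_rpow_const w (-a) (Or.inl (ne_of_gt hw))).mul
      ((Real.continuous_exp.comp continuous_neg).continuousAt)))
  have heq : lowerGamma (1 - a) = fun u => ∫ t in (0:ℝ)..u, t ^ (-a) * Real.exp (-t) := by
    funext u; exact lowerGamma_eq a u
  rw [heq]
  exact h

lemma hasDerivAt_g (ha : 0 < a) (ha1 : a < 1) {w : ℝ} (hw : 0 < w) :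
    HasDerivAt (gFun a) (gFun' a w) w := by
  have h1 : HasDerivAt (fun w : ℝ => Real.exp (-w)) (-Real.exp (-w)) w := by
    exact ((Real.hasDerivAt_exp (-w)).comp w (hasDerivAt_neg w)).congr_deriv (by ring)
  have h2 : HasDerivAt (fun w : ℝ => w ^ a) (a * w ^ (a - 1)) w :=
    Real.hasDerivAt_rpow_const (Or.inl (ne_of_gt hw))
  have h3 := h2.mul (hasDerivAt_lowerGamma ha ha1 hw)
  have h4 := ((hasDerivAt_const w (1:ℝ)).sub h1).sub h3
  refine h4.congr_deriv (Eq.symm ?_)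
  unfold gFun'
  have hww : w ^ a * (w ^ (-a) * Real.exp (-w)) = Real.exp (-w) := by
    rw [← mul_assoc, ← Real.rpow_add hw]
    simp
  rw [hww]
  ring

lemma hasDerivAt_g' (ha : 0 < a) (ha1 : a < 1) {w : ℝ} (hw : 0 < w) :
    HasDerivAt (gFun' a) (gFun'' a w) w := by
  have h2 : HasDerivAt (fun w : ℝ => w ^ (a - 1)) ((a - 1) * w ^ (a - 1 - 1)) w :=
    Real.hasDerivAt_rpow_const (Or.inl (ne_of_gt hw))
  have h3 := (((h2.const_mul a).mul (hasDerivAt_lowerGamma ha ha1 hw))).neg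
  have heq : ∀ u : ℝ, -(a * u ^ (a - 1) * lowerGamma (1 - a) u)
      = -((a * u ^ (a - 1)) * lowerGamma (1 - a) u) := fun u => by ring
  have h4 : HasDerivAt (gFun' a)
      (-(a * ((a - 1) * w ^ (a - 1 - 1)) * lowerGamma (1 - a) w
        + a * w ^ (a - 1) * (w ^ (-a) * Real.exp (-w)))) w := by
    unfold gFun'
    exact h3
  convert h4 using 1
  unfold gFun''
  have e1 : w ^ (a - 1 - 1) = w ^ (a - 1) / w := by
    rw [show a - 1 - 1 = (a - 1) - 1 by ring, Real.rpow_sub hw, Real.rpow_one]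
  have e2 : w ^ (a - 1) * w ^ (-a) = 1 / w := by
    rw [← Real.rpow_add hw, show a - 1 + -a = -1 by ring, Real.rpow_neg_one]
    exact (one_div w).symm
  rw [e1]
  have e3 : a * w ^ (a - 1) * (w ^ (-a) * Real.exp (-w))
      = a / w * Real.exp (-w) := by
    rw [show a * w ^ (a-1) * (w ^ (-a) * Real.exp (-w))
      = a * (w ^ (a-1) * w ^ (-a)) * Real.exp (-w) by ring, e2]
    ring
  rw [e3]
  field_simp
  ring

lemma ibp (ha : 0 < a) (ha1 : a < 1) {w : ℝ} (hw : 0 < w) :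
    (1 - a) * lowerGamma (1 - a) w
      = w ^ (1 - a) * Real.exp (-w) + ∫ t in (0:ℝ)..w, t ^ (1 - a) * Real.exp (-t) := by
  set F : ℝ → ℝ := fun t => t ^ (1 - a) * Real.exp (-t) with hF
  have hder : ∀ t ∈ Ioo (0:ℝ) w, HasDerivAt F
      ((1 - a) * t ^ (-a) * Real.exp (-t) - t ^ (1 - a) * Real.exp (-t)) t := by
    intro t ht
    have h1 : HasDerivAt (fun t : ℝ => t ^ (1 - a)) ((1 - a) * t ^ (1 - a - 1)) t :=
      Real.hasDerivAt_rpow_const (Or.inl (ne_of_gt ht.1))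
    have h2 : HasDerivAt (fun t : ℝ => Real.exp (-t)) (-Real.exp (-t)) t := by
      exact ((Real.hasDerivAt_exp (-t)).comp t (hasDerivAt_neg t)).congr_deriv (by ring)
    have h3 := h1.mul h2
    refine h3.congr_deriv (Eq.symm ?_)
    rw [show (1 : ℝ) - a - 1 = -a by ring]
    ring
  have hcont : ContinuousOn F (Icc 0 w) := (cont2 ha1).continuousOn
  have hint : IntervalIntegrable
      (fun t => (1 - a) * t ^ (-a) * Real.exp (-t) - t ^ (1 - a) * Real.exp (-t)) volume 0 w := by
    have h := ((integrable1 ha ha1 0 w).const_mul (1 - a)).sub (integrable2 ha1 0 w)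
    convert h using 2 with t
    ring
  have key := intervalIntegral.integral_eq_sub_of_hasDerivAt_of_le hw.le hcont hder hint
  have hsplit : (∫ t in (0:ℝ)..w,
        ((1 - a) * t ^ (-a) * Real.exp (-t) - t ^ (1 - a) * Real.exp (-t)))
      = (1 - a) * lowerGamma (1 - a) w - ∫ t in (0:ℝ)..w, t ^ (1 - a) * Real.exp (-t) := by
    rw [intervalIntegral.integral_sub (by
        have h := (integrable1 ha ha1 0 w).const_mul (1 - a)
        convert h using 2 with t; ring) (integrable2 ha1 0 w)]
    congr 1
    rw [lowerGamma_eq, ← intervalIntegral.integral_const_mul]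
    congr 1 with t
    ring
  rw [hsplit] at key
  have hF0 : F 0 = 0 := by
    simp [hF, Real.zero_rpow (by linarith : (1:ℝ) - a ≠ 0)]
  have hFw : F w = w ^ (1 - a) * Real.exp (-w) := rfl
  rw [hF0, hFw, sub_zero] at key
  linarith

lemma g''_eq (ha : 0 < a) (ha1 : a < 1) {w : ℝ} (hw : 0 < w) :
    gFun'' a w = a * w ^ (a - 2) * ∫ t in (0:ℝ)..w, t ^ (1 - a) * Real.exp (-t) := by
  have h := ibp ha ha1 hw
  set I := ∫ t in (0:ℝ)..w, t ^ (1 - a) * Real.exp (-t) with hI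
  unfold gFun''
  have e0 : w ^ (a - 1) * w ^ (1 - a) = 1 := by
    rw [← Real.rpow_add hw]; norm_num
  have e1 : (1 - a) * w ^ (a - 1) * lowerGamma (1 - a) w
      = Real.exp (-w) + w ^ (a - 1) * I := by
    have h' : (1 - a) * w ^ (a - 1) * lowerGamma (1 - a) w
        = w ^ (a - 1) * ((1 - a) * lowerGamma (1 - a) w) := by ring
    rw [h', h, mul_add, ← mul_assoc, e0, one_mul]
  rw [e1]
  have e2 : w ^ (a - 2) = w ^ (a - 1) / w := by
    rw [show a - 2 = (a - 1) - 1 by ring, Real.rpow_sub hw, Real.rpow_one]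
  rw [e2]
  field_simp
  ring

lemma g''_bounds (ha : 0 < a) (ha1 : a < 1) {w : ℝ} (hw : 0 < w) :
    0 ≤ gFun'' a w ∧ gFun'' a w ≤ a / (2 - a) := by
  rw [g''_eq ha ha1 hw]
  set I := ∫ t in (0:ℝ)..w, t ^ (1 - a) * Real.exp (-t) with hI
  have hInonneg : 0 ≤ I := by
    apply intervalIntegral.integral_nonneg hw.le
    intro t ht
    exact mul_nonneg (Real.rpow_nonneg ht.1 _) (Real.exp_pos _).le
  have hpow : (0:ℝ) < w ^ (a - 2) := Real.rpow_pos_of_pos hw _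
  constructor
  · positivity
  · have hIle : I ≤ w ^ (2 - a) / (2 - a) := by
      have hmono : I ≤ ∫ t in (0:ℝ)..w, t ^ (1 - a) := by
        apply intervalIntegral.integral_mono_on hw.le (integrable2 ha1 0 w)
          (intervalIntegrable_rpow' (by linarith))
        intro t ht
        have h1 : Real.exp (-t) ≤ 1 := Real.exp_le_one_iff.mpr (by linarith [ht.1])
        have h2 : (0:ℝ) ≤ t ^ (1 - a) := Real.rpow_nonneg ht.1 _
        nlinarith
      have hval : (∫ t in (0:ℝ)..w, t ^ (1 - a)) = w ^ (2 - a) / (2 - a) := by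
        rw [integral_rpow (Or.inl (by linarith))]
        rw [Real.zero_rpow (by linarith : (1:ℝ) - a + 1 ≠ 0)]
        rw [show (1:ℝ) - a + 1 = 2 - a by ring]
        ring
      linarith [hmono.trans_eq hval]
    have e3 : a * w ^ (a - 2) * I ≤ a * w ^ (a - 2) * (w ^ (2 - a) / (2 - a)) :=
      mul_le_mul_of_nonneg_left hIle (by positivity)
    have e4 : a * w ^ (a - 2) * (w ^ (2 - a) / (2 - a)) = a / (2 - a) := by
      have hone : w ^ (a - 2) * w ^ (2 - a) = 1 := by
        rw [← Real.rpow_add hw]; norm_num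
      rw [show a * w ^ (a - 2) * (w ^ (2 - a) / (2 - a))
        = a * (w ^ (a - 2) * w ^ (2 - a)) / (2 - a) by ring, hone, mul_one]
    linarith

lemma g_cont0 (ha : 0 < a) (ha1 : a < 1) : ContinuousOn (gFun a) (Ici 0) := by
  intro x hx
  rcases eq_or_lt_of_le (Set.mem_Ici.mp hx) with h | h
  · subst h
    unfold gFun
    apply ContinuousWithinAt.sub
    · exact (continuous_const.sub (Real.continuous_exp.comp continuous_neg)).continuousWithinAt
    · have hzero : (0:ℝ) ^ a * lowerGamma (1 - a) 0 = 0 := by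
        rw [Real.zero_rpow (ne_of_gt ha)]; ring
      rw [ContinuousWithinAt, hzero]
      apply squeeze_zero' (g := fun w => w / (1 - a))
      · filter_upwards [self_mem_nhdsWithin] with w hw
        have hw0 : (0:ℝ) ≤ w := hw
        refine mul_nonneg (Real.rpow_nonneg hw0 _) ?_
        rw [lowerGamma_eq]
        apply intervalIntegral.integral_nonneg hw0
        intro t ht
        exact mul_nonneg (Real.rpow_nonneg ht.1 _) (Real.exp_pos _).le
      · filter_upwards [self_mem_nhdsWithin] with w hw
        have hw0 : (0:ℝ) ≤ w := hw
        rcases eq_or_lt_of_le hw0 with h0 | h0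
        · rw [← h0, Real.zero_rpow (ne_of_gt ha)]
          norm_num
        · have hγ : lowerGamma (1 - a) w ≤ w ^ (1 - a) / (1 - a) := by
            rw [lowerGamma_eq]
            have hmono : (∫ t in (0:ℝ)..w, t ^ (-a) * Real.exp (-t))
                ≤ ∫ t in (0:ℝ)..w, t ^ (-a) := by
              apply intervalIntegral.integral_mono_on hw0 (integrable1 ha ha1 0 w)
                (intervalIntegrable_rpow' (by linarith))
              intro t ht
              have h1 : Real.exp (-t) ≤ 1 := Real.exp_le_one_iff.mpr (by linarith [ht.1])
              have h2 : (0:ℝ) ≤ t ^ (-a) := Real.rpow_nonneg ht.1 _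
              nlinarith
            have hval : (∫ t in (0:ℝ)..w, t ^ (-a)) = w ^ (1 - a) / (1 - a) := by
              rw [integral_rpow (Or.inl (by linarith))]
              rw [Real.zero_rpow (by linarith : -a + 1 ≠ 0)]
              rw [show -a + 1 = 1 - a by ring]
              ring
            linarith [hmono.trans_eq hval]
          calc w ^ a * lowerGamma (1 - a) w ≤ w ^ a * (w ^ (1 - a) / (1 - a)) :=
                mul_le_mul_of_nonneg_left hγ (Real.rpow_nonneg hw0 _)
            _ = w / (1 - a) := by
                rw [show w ^ a * (w ^ (1-a) / (1-a)) = (w ^ a * w ^ (1-a)) / (1-a) by ring,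
                  ← Real.rpow_add h0]
                norm_num
      · have ht : Filter.Tendsto (fun w : ℝ => w / (1 - a)) (nhds 0) (nhds 0) := by
          have h := (continuous_id.div_const (1 - a)).tendsto (0:ℝ)
          simpa using h
        exact ht.mono_left nhdsWithin_le_nhds
  · exact ((hasDerivAt_g ha ha1 h).continuousAt).continuousWithinAt

end aux

theorem gFun_second_deriv (a : ℝ) (ha : 0 < a) (ha1 : a < 1) :
    (∀ w : ℝ, 0 < w → HasDerivAt (gFun a) (gFun' a w) w) ∧
    (∀ w : ℝ, 0 < w → HasDerivAt (gFun' a) (gFun'' a w) w) ∧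
    (∀ w : ℝ, 0 < w → 0 ≤ gFun'' a w ∧ gFun'' a w ≤ a / (2 - a)) ∧
    ConvexOn ℝ (Set.Ici 0) (gFun a) := by
  refine ⟨fun w hw => hasDerivAt_g ha ha1 hw, fun w hw => hasDerivAt_g' ha ha1 hw,
    fun w hw => g''_bounds ha ha1 hw, ?_⟩
  apply convexOn_of_hasDerivWithinAt2_nonneg (convex_Ici 0) (g_cont0 ha ha1)
    (f' := gFun' a) (f'' := gFun'' a)
  · intro x hx
    rw [interior_Ici] at hx
    exact (hasDerivAt_g ha ha1 hx).hasDerivWithinAt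
  · intro x hx
    rw [interior_Ici] at hx
    exact (hasDerivAt_g' ha ha1 hx).hasDerivWithinAt
  · intro x hx
    rw [interior_Ici] at hx
    exact (g''_bounds ha ha1 hx).1
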